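/- arXiv:2311.09420 — 4 statements merged into one kernel-verified Lean document; each statement's English description precedes it below -/
import Mathlib

section
/- Let F : ℝ³ × ℝ³ → [0,∞) be a C¹ function with F(v,w) = F(w,v) for all v,w. Assume F and |∇F| are integrable on ℝ⁶, that the marginal πF(v) = ∫_{ℝ³} F(v,w) dw is C¹, and that ∇(πF)(v) = ∫_{ℝ³} ∇_v F(v,w) dw for all v. Then i(πF) ≤ (1/2)·I(F). -/
open MeasureTheory Real Set Metric Matrix
open scoped ENNReal

noncomputable section

abbrev E3 := EuclideanSpace ℝ (Fin 3)

/-- The cross product on `ℝ³`. -/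
def cross3 (a z : E3) : E3 :=
  WithLp.toLp 2 ![a 1 * z 2 - a 2 * z 1, a 2 * z 0 - a 0 * z 2, a 0 * z 1 - a 1 * z 0]

/-- The vector field `b_k(z) = e_k × z`. -/
def bvec (k : Fin 3) (z : E3) : E3 := cross3 (EuclideanSpace.single k 1) z

/-- Directional derivative `b·∇G` along a vector field `b`. -/
def dd {E : Type*} [NormedAddCommGroup E] [NormedSpace ℝ E]
    (b : E → E) (G : E → ℝ) (x : E) : ℝ := fderiv ℝ G x (b x)

/-- The lifted vector fields `b̃_k(v,w) = (b_k(v-w), -b_k(v-w))` on `ℝ⁶ = ℝ³ × ℝ³`. -/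
def btilde (k : Fin 3) (x : E3 × E3) : E3 × E3 :=
  (bvec k (x.1 - x.2), -bvec k (x.1 - x.2))

/-- Full gradient on `ℝ⁶ = ℝ³ × ℝ³`, as the pair of partial gradients. -/
def grad6 (F : E3 × E3 → ℝ) (x : E3 × E3) : E3 × E3 :=
  (gradient (fun v => F (v, x.2)) x.1, gradient (fun w => F (x.1, w)) x.2)

/-- Euclidean inner product on `ℝ⁶ = ℝ³ × ℝ³`. -/
def dot6 (a b : E3 × E3) : ℝ := (inner ℝ a.1 b.1 : ℝ) + (inner ℝ a.2 b.2 : ℝ)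

/-- Squared Euclidean norm on `ℝ⁶ = ℝ³ × ℝ³`. -/
def normSq6 (a : E3 × E3) : ℝ := ‖a.1‖ ^ 2 + ‖a.2‖ ^ 2

/-- The Fisher information of `f : ℝ³ → [0,∞)`, valued in `[0,∞]`;
the integrand is `0` where `f` vanishes. -/
def fisher3 (f : E3 → ℝ) : ℝ≥0∞ :=
  ∫⁻ v, ENNReal.ofReal (if f v = 0 then 0 else ‖gradient f v‖ ^ 2 / f v)

/-- The Fisher information of `F : ℝ⁶ → [0,∞)`, valued in `[0,∞]`. -/
def fisher6 (F : E3 × E3 → ℝ) : ℝ≥0∞ :=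
  ∫⁻ x : E3 × E3, ENNReal.ofReal (if F x = 0 then 0 else normSq6 (grad6 F x) / F x)

/-- The integrand (in `w`) in the definition of the Landau collision operator. -/
def landauIntegrand (α : ℝ → ℝ) (f : E3 → ℝ) (i : Fin 3) (v w : E3) : ℝ :=
  ∑ j : Fin 3,
    α ‖v - w‖ * (‖v - w‖ ^ 2 * (if i = j then (1 : ℝ) else 0) - (v - w) i * (v - w) j) *
      (fderiv ℝ f v (EuclideanSpace.single j 1) * f w
        - f v * fderiv ℝ f w (EuclideanSpace.single j 1))

/-- The Landau collision operator `q(f)`. -/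
def landauQ (α : ℝ → ℝ) (f : E3 → ℝ) (v : E3) : ℝ :=
  ∑ i : Fin 3,
    fderiv ℝ (fun v' : E3 => ∫ w : E3, landauIntegrand α f i v' w) v
      (EuclideanSpace.single i 1)

/-- The lifted Landau operator `Q(F) = Σ_k α(|v-w|) b̃_k·∇(b̃_k·∇F)`. -/
def liftQ (α : ℝ → ℝ) (F : E3 × E3 → ℝ) (x : E3 × E3) : ℝ :=
  ∑ k : Fin 3, α ‖x.1 - x.2‖ * dd (btilde k) (dd (btilde k) F) x

/-- A function on `ℝ⁶` is well-behaved if it is `C^∞` and coincides with the Gaussian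
`exp(-|v|²-|w|²)` outside a compact set. -/
def WellBehaved (F : E3 × E3 → ℝ) : Prop :=
  ContDiff ℝ (⊤ : ℕ∞) F ∧ ∃ K : Set (E3 × E3), IsCompact K ∧
    ∀ x ∉ K, F x = Real.exp (-‖x.1‖ ^ 2 - ‖x.2‖ ^ 2)

/-- The unit normal `n` to the level sets of `(v,w) ↦ |v-w|`. -/
def nvec (x : E3 × E3) : E3 × E3 :=
  (Real.sqrt 2 * ‖x.1 - x.2‖)⁻¹ • (x.1 - x.2, x.2 - x.1)

/-- Surface measure on the unit sphere `S²` in `ℝ³`. -/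
def sphMeasure : Measure (sphere (0 : E3) 1) := (volume : Measure E3).toSphere

/-- The matrix `(A_g(σ))_{ij} = b_i·∇(b_j·∇ g)(σ)`. -/
def matA (g : E3 → ℝ) (x : E3) : Matrix (Fin 3) (Fin 3) ℝ :=
  fun i j => dd (bvec i) (dd (bvec j) g) x

/-- Symmetric part `M_g = (A_g + A_gᵀ)/2`. -/
def matM (g : E3 → ℝ) (x : E3) : Matrix (Fin 3) (Fin 3) ℝ :=
  (1 / 2 : ℝ) • (matA g x + (matA g x)ᵀ)

/-- Squared Frobenius norm of a `3×3` matrix. -/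
def frobSq (M : Matrix (Fin 3) (Fin 3) ℝ) : ℝ := ∑ i : Fin 3, ∑ j : Fin 3, (M i j) ^ 2

/-!
Differentiating under the integral, `∇πF(v) = ∫ ∇_v F(v,w) dw`, and the Cauchy–Schwarz inequality
for the weight `F(v,·)` give `|∇πF(v)|² / πF(v) ≤ ∫ |∇_v F(v,w)|² / F(v,w) dw`. Integrating in `v`
bounds `i(πF)` by the `v`-part of `I(F)`, which by the symmetry `F(v,w) = F(w,v)` is half of `I(F)`.
-/

open InnerProductSpace

theorem ENNReal.sq_lintegral_rpow_half_mul_le {α : Type*} [MeasurableSpace α] {μ : Measure α}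
    {f g : α → ℝ≥0∞} (hf : AEMeasurable f μ) (hg : AEMeasurable g μ) :
    (∫⁻ x, f x ^ (1 / 2 : ℝ) * g x ^ (1 / 2 : ℝ) ∂μ) ^ 2 ≤ (∫⁻ x, f x ∂μ) * ∫⁻ x, g x ∂μ := by
  have hsq : ∀ a : ℝ≥0∞, (a ^ (1 / 2 : ℝ)) ^ 2 = a := fun a => by
    rw [← ENNReal.rpow_natCast, ← ENNReal.rpow_mul]; norm_num
  calc _ ≤ ((∫⁻ x, f x ∂μ) ^ (1 / 2 : ℝ) * (∫⁻ x, g x ∂μ) ^ (1 / 2 : ℝ)) ^ 2 := by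
        gcongr
        exact ENNReal.lintegral_mul_norm_pow_le hf hg (by norm_num) (by norm_num) (by norm_num)
    _ = _ := by rw [mul_pow, hsq, hsq]

theorem enorm_eq_ofReal_sq_div_rpow_mul {E : Type*} [NormedAddCommGroup E] {a : E} {b : ℝ}
    (hb : 0 ≤ b) (hab : b = 0 → a = 0) :
    ‖a‖ₑ = ENNReal.ofReal (‖a‖ ^ 2 / b) ^ (1 / 2 : ℝ) * ENNReal.ofReal b ^ (1 / 2 : ℝ) := by
  rcases hb.eq_or_lt with rfl | hb
  · simp [hab rfl]
  rw [← ENNReal.mul_rpow_of_nonneg _ _ (by norm_num), ← ENNReal.ofReal_mul (by positivity),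
    div_mul_cancel₀ _ hb.ne', ENNReal.ofReal_pow (norm_nonneg a), ← ENNReal.rpow_natCast,
    ← ENNReal.rpow_mul, ofReal_norm]
  norm_num

theorem ofReal_norm_integral_sq_div_le_lintegral {α E : Type*} [MeasurableSpace α]
    {μ : Measure α} [NormedAddCommGroup E] [NormedSpace ℝ E] {f : α → ℝ} {g : α → E}
    (hf : Integrable f μ) (hf_nonneg : ∀ x, 0 ≤ f x) (hg : AEStronglyMeasurable g μ)
    (hfg : ∀ x, f x = 0 → g x = 0) :
    ENNReal.ofReal (‖∫ x, g x ∂μ‖ ^ 2 / ∫ x, f x ∂μ)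
      ≤ ∫⁻ x, ENNReal.ofReal (‖g x‖ ^ 2 / f x) ∂μ := by
  rcases (integral_nonneg (f := f) (μ := μ) hf_nonneg).eq_or_lt with hI | hI
  · simp [← hI]
  have hfI : ∫⁻ x, ENNReal.ofReal (f x) ∂μ = ENNReal.ofReal (∫ x, f x ∂μ) :=
    (ofReal_integral_eq_lintegral_ofReal hf (.of_forall hf_nonneg)).symm
  have hCS : ‖∫ x, g x ∂μ‖ₑ ^ 2
      ≤ (∫⁻ x, ENNReal.ofReal (‖g x‖ ^ 2 / f x) ∂μ) * ENNReal.ofReal (∫ x, f x ∂μ) :=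
    calc ‖∫ x, g x ∂μ‖ₑ ^ 2 ≤ (∫⁻ x, ‖g x‖ₑ ∂μ) ^ 2 := by
          gcongr; exact enorm_integral_le_lintegral_enorm g
      _ = (∫⁻ x, ENNReal.ofReal (‖g x‖ ^ 2 / f x) ^ (1 / 2 : ℝ)
            * ENNReal.ofReal (f x) ^ (1 / 2 : ℝ) ∂μ) ^ 2 := by
          simp_rw [← enorm_eq_ofReal_sq_div_rpow_mul (hf_nonneg _) (hfg _)]
      _ ≤ _ := hfI ▸ ENNReal.sq_lintegral_rpow_half_mul_le
          ((hg.norm.pow 2).aemeasurable.div hf.aemeasurable).ennreal_ofReal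
          hf.aemeasurable.ennreal_ofReal
  rw [ENNReal.ofReal_div_of_pos hI, ENNReal.ofReal_pow (norm_nonneg _), ofReal_norm,
    ENNReal.div_le_iff_le_mul (.inl (ENNReal.ofReal_pos.mpr hI).ne') (.inl ENNReal.ofReal_ne_top)]
  exact hCS

theorem IsLocalMin.gradient_eq_zero {E : Type*} [NormedAddCommGroup E] [InnerProductSpace ℝ E]
    [CompleteSpace E] {f : E → ℝ} {a : E} (h : IsLocalMin f a) : gradient f a = 0 := by
  rw [gradient, h.fderiv_eq_zero, map_zero]

section PartialGradient

variable {E E' : Type*} [NormedAddCommGroup E] [InnerProductSpace ℝ E] [CompleteSpace E]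
  [NormedAddCommGroup E'] [NormedSpace ℝ E']

theorem gradient_comp_prodMk_left_eq {f : E × E' → ℝ} {x : E × E'} (hf : DifferentiableAt ℝ f x) :
    gradient (fun v => f (v, x.2)) x.1
      = (toDual ℝ E).symm ((fderiv ℝ f x).comp (ContinuousLinearMap.inl ℝ E E')) := by
  rw [gradient, HasFDerivAt.fderiv (f := fun v => f (v, x.2))
      (hf.hasFDerivAt.comp x.1 (hasFDerivAt_prodMk_left x.1 x.2))]

theorem measurable_gradient_comp_prodMk_left [MeasurableSpace E] [BorelSpace E]
    [MeasurableSpace E'] [BorelSpace E'] [SecondCountableTopologyEither E E']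
    {f : E × E' → ℝ} (hf : Differentiable ℝ f) :
    Measurable fun x : E × E' => gradient (fun v => f (v, x.2)) x.1 := by
  simp_rw [gradient_comp_prodMk_left_eq (hf _)]
  exact (toDual ℝ E).symm.continuous.measurable.comp
    (((ContinuousLinearMap.compL ℝ E (E × E') ℝ).flip
      (ContinuousLinearMap.inl ℝ E E')).continuous.measurable.comp (measurable_fderiv ℝ f))

end PartialGradient

-- Real division by zero is already `0`, so the `if` in `fisher3` and `fisher6` is redundant.
theorem ite_eq_zero_div_eq_div (a b : ℝ) : (if b = 0 then 0 else a / b) = a / b := by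
  split_ifs with hb <;> simp [hb]

def fisherFst (F : E3 × E3 → ℝ) : ℝ≥0∞ :=
  ∫⁻ x, ENNReal.ofReal (‖(grad6 F x).1‖ ^ 2 / F x)

theorem measurable_fisherFst_integrand {F : E3 × E3 → ℝ} (hF : Differentiable ℝ F) :
    Measurable fun x => ENNReal.ofReal (‖(grad6 F x).1‖ ^ 2 / F x) :=
  (((measurable_gradient_comp_prodMk_left hF).norm.pow_const 2).div
    hF.continuous.measurable).ennreal_ofReal

theorem fisher6_eq_two_mul_fisherFst {F : E3 × E3 → ℝ} (hF : Differentiable ℝ F)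
    (hnonneg : ∀ x, 0 ≤ F x) (hsym : ∀ v w : E3, F (v, w) = F (w, v)) :
    fisher6 F = 2 * fisherFst F := by
  have hF_swap : ∀ x : E3 × E3, F x.swap = F x := fun x => hsym x.2 x.1
  have hgrad_swap : ∀ x : E3 × E3, (grad6 F x.swap).2 = (grad6 F x).1 := by
    rintro ⟨v, w⟩
    show gradient (fun w' => F (w, w')) v = gradient (fun v' => F (v', w)) v
    simp only [hsym w]
  have hsnd : ∫⁻ x, ENNReal.ofReal (‖(grad6 F x).2‖ ^ 2 / F x) = fisherFst F := by
    rw [fisherFst, Measure.volume_eq_prod, ← lintegral_prod_swap]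
    simp only [hgrad_swap, hF_swap]
  calc fisher6 F
      = ∫⁻ x, ENNReal.ofReal (‖(grad6 F x).1‖ ^ 2 / F x)
          + ENNReal.ofReal (‖(grad6 F x).2‖ ^ 2 / F x) :=
        lintegral_congr fun x => by
          rw [ite_eq_zero_div_eq_div, normSq6, add_div,
            ENNReal.ofReal_add (div_nonneg (sq_nonneg _) (hnonneg x))
              (div_nonneg (sq_nonneg _) (hnonneg x))]
    _ = 2 * fisherFst F := by
        rw [lintegral_add_left (measurable_fisherFst_integrand hF), hsnd, fisherFst, two_mul]

theorem fisher3_marginal_le_fisherFst {F : E3 × E3 → ℝ} (hF : Differentiable ℝ F)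
    (hnonneg : ∀ x, 0 ≤ F x) (hint : Integrable F)
    (hmarggrad : ∀ v : E3,
      gradient (fun v' : E3 => ∫ w : E3, F (v', w)) v
        = ∫ w : E3, gradient (fun v' : E3 => F (v', w)) v) :
    fisher3 (fun v : E3 => ∫ w : E3, F (v, w)) ≤ fisherFst F := by
  have hmeas := measurable_gradient_comp_prodMk_left hF
  have hslice : ∀ᵐ v : E3, Integrable fun w => F (v, w) :=
    (Measure.volume_eq_prod E3 E3 ▸ hint).prod_right_ae
  have hgrad_zero : ∀ v w, F (v, w) = 0 → gradient (fun v' => F (v', w)) v = 0 :=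
    fun v w h => IsLocalMin.gradient_eq_zero (.of_forall fun y => (h.trans_le (hnonneg (y, w)) :))
  calc fisher3 (fun v : E3 => ∫ w : E3, F (v, w))
      = ∫⁻ v, ENNReal.ofReal
          (‖gradient (fun v' : E3 => ∫ w : E3, F (v', w)) v‖ ^ 2 / ∫ w, F (v, w)) := by
        simp only [fisher3, ite_eq_zero_div_eq_div]
    _ ≤ ∫⁻ v, ∫⁻ w, ENNReal.ofReal (‖(grad6 F (v, w)).1‖ ^ 2 / F (v, w)) :=
        lintegral_mono_ae <| hslice.mono fun v hv => hmarggrad v ▸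
          ofReal_norm_integral_sq_div_le_lintegral hv (fun w => hnonneg _)
            (hmeas.comp measurable_prodMk_left).aestronglyMeasurable (hgrad_zero v)
    _ = fisherFst F := by
        rw [fisherFst, Measure.volume_eq_prod,
          lintegral_prod _ (measurable_fisherFst_integrand hF).aemeasurable]

theorem fisher_marginal_le_general
    (F : E3 × E3 → ℝ) (hF : ContDiff ℝ 1 F) (hnonneg : ∀ x, 0 ≤ F x)
    (hsym : ∀ v w : E3, F (v, w) = F (w, v))
    (hint : Integrable F)
    (hmarggrad : ∀ v : E3,
      gradient (fun v' : E3 => ∫ w : E3, F (v', w)) v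
        = ∫ w : E3, gradient (fun v' : E3 => F (v', w)) v) :
    fisher3 (fun v : E3 => ∫ w : E3, F (v, w)) ≤ (1 / 2 : ℝ≥0∞) * fisher6 F := by
  have hFd : Differentiable ℝ F := hF.differentiable one_ne_zero
  calc fisher3 (fun v : E3 => ∫ w : E3, F (v, w))
      ≤ fisherFst F := fisher3_marginal_le_fisherFst hFd hnonneg hint hmarggrad
    _ = (1 / 2 : ℝ≥0∞) * fisher6 F := by
        rw [fisher6_eq_two_mul_fisherFst hFd hnonneg hsym, ← mul_assoc, one_div,
          ENNReal.inv_mul_cancel two_ne_zero ENNReal.ofNat_ne_top, one_mul]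

/-- **`i(πF) ≤ ½ I(F)`** (Lemma 3.3 in the paper): projection onto a marginal
decreases the Fisher information. -/
theorem fisher_marginal_le
    (F : E3 × E3 → ℝ) (hF : ContDiff ℝ 1 F) (hnonneg : ∀ x, 0 ≤ F x)
    (hsym : ∀ v w : E3, F (v, w) = F (w, v))
    (hint : Integrable F)
    (hgradint : Integrable (fun x : E3 × E3 => Real.sqrt (normSq6 (grad6 F x))))
    (hmargC1 : ContDiff ℝ 1 (fun v : E3 => ∫ w : E3, F (v, w)))
    (hmarggrad : ∀ v : E3,
      gradient (fun v' : E3 => ∫ w : E3, F (v', w)) v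
        = ∫ w : E3, gradient (fun v' : E3 => F (v', w)) v) :
    fisher3 (fun v : E3 => ∫ w : E3, F (v, w)) ≤ (1 / 2 : ℝ≥0∞) * fisher6 F :=
  fisher_marginal_le_general F hF hnonneg hsym hint hmarggrad
end
end

section
/- Let g : ℝ³ → ℝ be C² and let σ ∈ S². Then ∫_{e ∈ S²} ( b_e·∇(b_e·∇g)(σ) )² de = 2c₁·‖M_g(σ)‖² + c₁·( tr M_g(σ) )², where for e ∈ S² the vector field b_e is defined by b_e(z) = e × z, and c₁ = ∫_{S²} x₁²·x₂² dS(x) (= 4π/15). -/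
open MeasureTheory Real Set Metric Matrix
open scoped ENNReal

noncomputable section

/-!
Since `e ↦ e × z` is linear, `b_e·∇(b_e·∇g)(σ) = ∑ᵢⱼ eᵢ eⱼ Aᵢⱼ` with `A = A_g(σ)`, so the left side
is `∑ Aᵢⱼ Aₖₗ ∫ eᵢ eⱼ eₖ eₗ`. The fourth moments of `S²` form the isotropic tensor
`c₁ (δᵢⱼ δₖₗ + δᵢₖ δⱼₗ + δᵢₗ δⱼₖ)`, and contracting it with `A ⊗ A` gives
`(tr A)² + ‖A‖² + tr (A²) = 2‖M‖² + (tr M)²`.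

The moments come from integrating a monomial of degree 4 against `exp (-‖x‖²)` over `ℝ³` in two
ways: in polar coordinates this is the sphere moment times a positive radial integral, and by
Fubini it is a product of one-dimensional Gaussian moments `Iₙ = ∫ xⁿ exp (-x²)`, which satisfy
`I₁ = I₃ = 0`, `I₀ = 2 I₂` and `2 I₄ = 3 I₂`.
-/

open Filter Topology

def cross3CLM : E3 →L[ℝ] E3 →L[ℝ] E3 :=
  LinearMap.toContinuousLinearMap
    (LinearMap.toContinuousLinearMap.toLinearMap ∘ₗ
      ((crossProduct.compl₁₂ (WithLp.linearEquiv 2 ℝ (Fin 3 → ℝ)).toLinearMap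
        (WithLp.linearEquiv 2 ℝ (Fin 3 → ℝ)).toLinearMap).compr₂
          (WithLp.linearEquiv 2 ℝ (Fin 3 → ℝ)).symm.toLinearMap))

lemma dd_dd_continuousLinearMap {E : Type*} [NormedAddCommGroup E] [NormedSpace ℝ E]
    {g : E → ℝ} (hg : ContDiff ℝ 2 g) (L₁ L₂ : E →L[ℝ] E) (x : E) :
    dd L₁ (dd L₂ g) x = fderiv ℝ (fderiv ℝ g) x (L₁ x) (L₂ x) + fderiv ℝ g x (L₂ (L₁ x)) := by
  have hDg : HasFDerivAt (fderiv ℝ g) (fderiv ℝ (fderiv ℝ g) x) x :=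
    ((hg.fderiv_right le_rfl).differentiable one_ne_zero x).hasFDerivAt
  change fderiv ℝ (fun y => fderiv ℝ g y (L₂ y)) x (L₁ x) = _
  rw [(hDg.clm_apply L₂.hasFDerivAt).fderiv]
  simp [add_comm]

lemma dd_cross3_dd_cross3 {g : E3 → ℝ} (hg : ContDiff ℝ 2 g) (e σ : E3) :
    dd (cross3 e ·) (dd (cross3 e ·) g) σ = ∑ i, ∑ j, e i * e j * matA g σ i j := by
  have hA (i j : Fin 3) : matA g σ i j = dd (cross3CLM (EuclideanSpace.single i 1))
      (dd (cross3CLM (EuclideanSpace.single j 1)) g) σ := rfl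
  have he : cross3CLM e = ∑ i, e i • cross3CLM (EuclideanSpace.single i 1) := by
    conv_lhs => rw [← (EuclideanSpace.basisFun (Fin 3) ℝ).sum_repr e]
    simp [map_sum]
  change dd (cross3CLM e) (dd (cross3CLM e) g) σ = _
  simp only [hA, dd_dd_continuousLinearMap hg, he]
  simp only [Fin.sum_univ_three, _root_.add_apply, _root_.smul_apply, map_add, map_smul,
    smul_eq_mul]
  ring

def gaussMoment (n : ℕ) : ℝ := ∫ x : ℝ, x ^ n * exp (-x ^ 2)

lemma integrable_pow_mul_exp_neg_sq (n : ℕ) :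
    Integrable fun x : ℝ => x ^ n * exp (-x ^ 2) := by
  simpa using integrable_rpow_mul_exp_neg_mul_sq one_pos (s := n)
    (by linarith [n.cast_nonneg (α := ℝ)])

lemma tendsto_pow_mul_exp_neg_sq_cocompact (n : ℕ) :
    Tendsto (fun x : ℝ => x ^ n * exp (-x ^ 2)) (cocompact ℝ) (𝓝 0) := by
  rw [tendsto_zero_iff_norm_tendsto_zero]
  simpa [abs_mul, abs_pow] using tendsto_rpow_abs_mul_exp_neg_mul_sq_cocompact one_pos n

lemma gaussMoment_of_odd {n : ℕ} (hn : Odd n) : gaussMoment n = 0 := by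
  have h := integral_neg_eq_self (fun x : ℝ => x ^ n * exp (-x ^ 2)) volume
  simp only [hn.neg_pow, neg_sq, neg_mul, integral_neg] at h
  unfold gaussMoment
  linarith

lemma gaussMoment_add_two (n : ℕ) : 2 * gaussMoment (n + 2) = (n + 1) * gaussMoment n := by
  have hderiv (x : ℝ) : HasDerivAt (fun x : ℝ => x ^ (n + 1) * exp (-x ^ 2))
      ((n + 1) * (x ^ n * exp (-x ^ 2)) - 2 * (x ^ (n + 2) * exp (-x ^ 2))) x := by
    have hexp : HasDerivAt (fun x : ℝ => exp (-x ^ 2)) (exp (-x ^ 2) * -(2 * x)) x := by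
      simpa using (hasDerivAt_pow 2 x).neg.exp
    refine ((hasDerivAt_pow (n + 1) x).fun_mul hexp).congr_deriv ?_
    push_cast
    ring
  have hint := ((integrable_pow_mul_exp_neg_sq n).const_mul (n + 1 : ℝ)).sub
    ((integrable_pow_mul_exp_neg_sq (n + 2)).const_mul 2)
  have hlim := tendsto_pow_mul_exp_neg_sq_cocompact (n + 1)
  have h := integral_of_hasDerivAt_of_tendsto hderiv hint (hlim.mono_left atBot_le_cocompact)
    (hlim.mono_left atTop_le_cocompact)
  rw [integral_sub ((integrable_pow_mul_exp_neg_sq n).const_mul _)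
      ((integrable_pow_mul_exp_neg_sq (n + 2)).const_mul 2),
    integral_const_mul, integral_const_mul, sub_self] at h
  unfold gaussMoment
  linarith

lemma integral_prod_pow_mul_exp_neg_norm_sq {ι : Type*} [Fintype ι] (α : ι → ℕ) :
    ∫ x : EuclideanSpace ℝ ι, (∏ i, x i ^ α i) * exp (-‖x‖ ^ 2) = ∏ i, gaussMoment (α i) := by
  rw [← (PiLp.volume_preserving_toLp ι).integral_comp
    (MeasurableEquiv.toLp 2 (ι → ℝ)).measurableEmbedding]
  have h (y : ι → ℝ) : (∏ i, (WithLp.toLp 2 y : EuclideanSpace ℝ ι) i ^ α i) *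
      exp (-‖(WithLp.toLp 2 y : EuclideanSpace ℝ ι)‖ ^ 2) = ∏ i, (y i ^ α i * exp (-y i ^ 2)) := by
    rw [EuclideanSpace.norm_sq_eq, ← Finset.sum_neg_distrib, Real.exp_sum,
      ← Finset.prod_mul_distrib]
    simp
  simp_rw [h]
  exact integral_fintype_prod_volume_eq_prod fun i t => t ^ α i * exp (-t ^ 2)

lemma integral_volumeIoiPow (n : ℕ) (φ : ℝ → ℝ) :
    ∫ r, φ r ∂(Measure.volumeIoiPow n) = ∫ r in Ioi (0 : ℝ), r ^ n * φ r := by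
  simp only [Measure.volumeIoiPow, ENNReal.ofReal]
  rw [integral_withDensity_eq_integral_smul (by fun_prop),
    integral_subtype_comap measurableSet_Ioi fun r => Real.toNNReal (r ^ n) • φ r]
  refine setIntegral_congr_fun measurableSet_Ioi fun r hr => ?_
  rw [NNReal.smul_def, Real.coe_toNNReal _ (pow_nonneg (le_of_lt hr) _), smul_eq_mul]

lemma integral_Ioi_pow_mul_exp_neg_sq_pos (n : ℕ) :
    0 < ∫ r in Ioi (0 : ℝ), r ^ n * exp (-r ^ 2) := by
  have h := integral_rpow_mul_exp_neg_rpow two_pos (q := n)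
    (by linarith [n.cast_nonneg (α := ℝ)])
  rw [setIntegral_congr_fun measurableSet_Ioi (g := fun r : ℝ => r ^ n * exp (-r ^ 2))
    fun r _ => by simp [rpow_natCast]] at h
  rw [h]
  have : 0 < Gamma ((n + 1) / 2) := Gamma_pos_of_pos (by positivity)
  positivity

lemma integral_mul_exp_neg_norm_sq_of_homogeneous {E : Type*} [NormedAddCommGroup E]
    [NormedSpace ℝ E] [FiniteDimensional ℝ E] [MeasurableSpace E] [BorelSpace E] [Nontrivial E]
    (μ : Measure E) [μ.IsAddHaarMeasure] {f : E → ℝ} {d : ℕ}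
    (hf : ∀ x ≠ 0, f x = ‖x‖ ^ d * f (‖x‖⁻¹ • x)) :
    ∫ x, f x * exp (-‖x‖ ^ 2) ∂μ = (∫ e, f e ∂μ.toSphere) *
      ∫ r in Ioi (0 : ℝ), r ^ (Module.finrank ℝ E - 1 + d) * exp (-r ^ 2) := by
  let G : sphere (0 : E) 1 × Ioi (0 : ℝ) → ℝ :=
    fun p => f p.1 * (p.2 ^ d * exp (-(p.2 : ℝ) ^ 2))
  have hG (x : ({0}ᶜ : Set E)) :
      f x * exp (-‖(x : E)‖ ^ 2) = G (homeomorphUnitSphereProd E x) := by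
    simp only [G, homeomorphUnitSphereProd_apply_fst_coe, homeomorphUnitSphereProd_apply_snd_coe]
    rw [hf x x.2]
    ring
  calc ∫ x, f x * exp (-‖x‖ ^ 2) ∂μ
      = ∫ x : ({0}ᶜ : Set E), f x * exp (-‖(x : E)‖ ^ 2) ∂(μ.comap (↑)) := by
        rw [integral_subtype_comap (measurableSet_singleton _).compl fun x => f x * exp (-‖x‖ ^ 2),
          restrict_compl_singleton]
    _ = ∫ p, G p ∂(μ.toSphere.prod (.volumeIoiPow (Module.finrank ℝ E - 1))) := by
        simp_rw [hG]
        exact μ.measurePreserving_homeomorphUnitSphereProd.integral_comp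
          (Homeomorph.measurableEmbedding _) G
    _ = _ := by
        rw [integral_prod_mul (fun e : sphere (0 : E) 1 => f e)
            (fun r : Ioi (0 : ℝ) => (r : ℝ) ^ d * exp (-(r : ℝ) ^ 2)),
          integral_volumeIoiPow _ fun r => r ^ d * exp (-r ^ 2)]
        simp_rw [← mul_assoc, ← pow_add]

lemma integral_sphere_prod_pow_mul {ι : Type*} [Fintype ι] [Nonempty ι] (α : ι → ℕ) :
    (∫ e, ∏ i, (e : EuclideanSpace ℝ ι) i ^ α i
        ∂(volume : Measure (EuclideanSpace ℝ ι)).toSphere) *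
      ∫ r in Ioi (0 : ℝ), r ^ (Fintype.card ι - 1 + ∑ i, α i) * exp (-r ^ 2)
      = ∏ i, gaussMoment (α i) := by
  rw [← integral_prod_pow_mul_exp_neg_norm_sq, ← finrank_euclideanSpace (𝕜 := ℝ),
    integral_mul_exp_neg_norm_sq_of_homogeneous]
  intro x hx
  have hx' : ‖x‖ ≠ 0 := norm_ne_zero_iff.mpr hx
  simp only [PiLp.smul_apply, smul_eq_mul, ← Finset.prod_pow_eq_pow_sum,
    ← Finset.prod_mul_distrib, ← mul_pow, ← mul_assoc, mul_inv_cancel₀ hx', one_mul]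

lemma List.prod_map_eq_prod_pow_count {ι M : Type*} [Fintype ι] [DecidableEq ι]
    [CommMonoid M] (l : List ι) (f : ι → M) : (l.map f).prod = ∏ m, f m ^ l.count m := by
  rw [Finset.prod_list_map_count]
  exact Finset.prod_subset (Finset.subset_univ _) fun m _ hm => by
    rw [List.count_eq_zero_of_not_mem (by simpa using hm), pow_zero]

def pairingSum (i j k l : Fin 3) : ℝ :=
  (if i = j then 1 else 0) * (if k = l then 1 else 0)
    + (if i = k then 1 else 0) * (if j = l then 1 else 0)
    + (if i = l then 1 else 0) * (if j = k then 1 else 0)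

lemma prod_gaussMoment_count (i j k l : Fin 3) :
    ∏ m, gaussMoment ([i, j, k, l].count m)
      = pairingSum i j k l * ∏ m, gaussMoment (![2, 2, 0] m) := by
  have h0 : gaussMoment 0 = 2 * gaussMoment 2 := by
    have := gaussMoment_add_two 0
    norm_num at this
    linarith
  have h1 : gaussMoment 1 = 0 := gaussMoment_of_odd odd_one
  have h3 : gaussMoment 3 = 0 := gaussMoment_of_odd (by decide)
  have h4 : gaussMoment 4 = 3 / 2 * gaussMoment 2 := by
    have := gaussMoment_add_two 2
    norm_num at this
    linarith
  fin_cases i <;> fin_cases j <;> fin_cases k <;> fin_cases l <;>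
    simp [Fin.prod_univ_three, pairingSum, h0, h1, h3, h4] <;>
    ring

lemma integral_sphMeasure_mul_mul_mul (i j k l : Fin 3) :
    ∫ e, (e : E3) i * (e : E3) j * (e : E3) k * (e : E3) l ∂sphMeasure
      = pairingSum i j k l * ∫ e, (e : E3) 0 ^ 2 * (e : E3) 1 ^ 2 ∂sphMeasure := by
  have hmoment (α : Fin 3 → ℕ) (hα : ∑ m, α m = 4) :
      (∫ e, ∏ m, (e : E3) m ^ α m ∂sphMeasure) *
        ∫ r in Ioi (0 : ℝ), r ^ (Fintype.card (Fin 3) - 1 + 4) * exp (-r ^ 2)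
        = ∏ m, gaussMoment (α m) := by
    rw [← hα]
    exact integral_sphere_prod_pow_mul α
  set R := ∫ r in Ioi (0 : ℝ), r ^ (Fintype.card (Fin 3) - 1 + 4) * exp (-r ^ 2)
  have hcount : ∑ m, [i, j, k, l].count m = 4 := by revert i j k l; decide
  have hquartic (e : E3) : e i * e j * e k * e l = ∏ m, e m ^ [i, j, k, l].count m := by
    simpa [mul_assoc] using List.prod_map_eq_prod_pow_count [i, j, k, l] e
  have hc (e : E3) : e 0 ^ 2 * e 1 ^ 2 = ∏ m, e m ^ (![2, 2, 0] m) := by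
    simp [Fin.prod_univ_three]
  refine mul_right_cancel₀ (b := R) (integral_Ioi_pow_mul_exp_neg_sq_pos _).ne' ?_
  calc (∫ e, (e : E3) i * (e : E3) j * (e : E3) k * (e : E3) l ∂sphMeasure) * R
      = ∏ m, gaussMoment ([i, j, k, l].count m) := by simp_rw [hquartic, hmoment _ hcount]
    _ = pairingSum i j k l * ∏ m, gaussMoment (![2, 2, 0] m) := prod_gaussMoment_count i j k l
    _ = (pairingSum i j k l * ∫ e, (e : E3) 0 ^ 2 * (e : E3) 1 ^ 2 ∂sphMeasure) * R := by
        simp_rw [hc, mul_assoc, hmoment ![2, 2, 0] rfl]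

lemma integrable_sphMeasure_of_continuous {f : sphere (0 : E3) 1 → ℝ} (hf : Continuous f) :
    Integrable f sphMeasure :=
  hf.integrable_of_hasCompactSupport (μ := (volume : Measure E3).toSphere) (.of_compactSpace f)

lemma integral_sphMeasure_quadratic_form_sq (A : Matrix (Fin 3) (Fin 3) ℝ) :
    ∫ e, (∑ i, ∑ j, (e : E3) i * (e : E3) j * A i j) ^ 2 ∂sphMeasure
      = (∫ e, (e : E3) 0 ^ 2 * (e : E3) 1 ^ 2 ∂sphMeasure) *
        ∑ i, ∑ j, ∑ k, ∑ l, pairingSum i j k l * A i j * A k l := by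
  have hsq (e : E3) : (∑ i, ∑ j, e i * e j * A i j) ^ 2
      = ∑ i, ∑ j, ∑ k, ∑ l, e i * e j * e k * e l * (A i j * A k l) := by
    simp_rw [sq, Finset.sum_mul, Finset.mul_sum]
    exact Finset.sum_congr rfl fun _ _ => Finset.sum_congr rfl fun _ _ =>
      Finset.sum_congr rfl fun _ _ => Finset.sum_congr rfl fun _ _ => by ring
  simp_rw [hsq]
  simp (disch := exact fun _ _ => integrable_sphMeasure_of_continuous (by fun_prop)) only
    [integral_finsetSum, integral_mul_const, integral_sphMeasure_mul_mul_mul, Finset.mul_sum]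
  congr! 4
  ring

lemma sum_pairingSum_mul (A : Matrix (Fin 3) (Fin 3) ℝ) :
    ∑ i, ∑ j, ∑ k, ∑ l, pairingSum i j k l * A i j * A k l
      = 2 * frobSq ((1 / 2 : ℝ) • (A + Aᵀ)) + trace ((1 / 2 : ℝ) • (A + Aᵀ)) ^ 2 := by
  simp only [pairingSum, frobSq, trace, diag_apply, Matrix.smul_apply, Matrix.add_apply,
    transpose_apply, smul_eq_mul, Fin.sum_univ_three, Fin.isValue, Fin.reduceEq, ↓reduceIte,
    mul_ite, ite_mul, mul_one, mul_zero, one_mul, zero_mul, add_zero, zero_add]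
  ring

theorem average_second_derivatives_general
    (g : E3 → ℝ) (hg : ContDiff ℝ 2 g) (σ : E3) :
    (∫ e : sphere (0 : E3) 1,
        (dd (fun z => cross3 e z) (dd (fun z => cross3 e z) g) σ) ^ 2 ∂sphMeasure)
      = 2 * (∫ x : sphere (0 : E3) 1,
            ((x : E3) 0) ^ 2 * ((x : E3) 1) ^ 2 ∂sphMeasure) * frobSq (matM g σ)
        + (∫ x : sphere (0 : E3) 1,
            ((x : E3) 0) ^ 2 * ((x : E3) 1) ^ 2 ∂sphMeasure) * (Matrix.trace (matM g σ)) ^ 2 := by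
  simp_rw [dd_cross3_dd_cross3 hg, integral_sphMeasure_quadratic_form_sq, sum_pairingSum_mul]
  rw [matM]
  ring

/-- **Averaging pure second derivatives over all directions** (Lemma 8.5 in the paper):
`∫_{S²} (b_e·∇(b_e·∇g)(σ))² de = 2c₁‖M_g(σ)‖² + c₁(tr M_g(σ))²`,
where `c₁ = ∫_{S²} x₁²x₂² dS`. -/
theorem average_second_derivatives
    (g : E3 → ℝ) (hg : ContDiff ℝ 2 g) (σ : E3) (hσ : σ ∈ sphere (0 : E3) 1) :
    (∫ e : sphere (0 : E3) 1,
        (dd (fun z => cross3 e z) (dd (fun z => cross3 e z) g) σ) ^ 2 ∂sphMeasure)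
      = 2 * (∫ x : sphere (0 : E3) 1,
            ((x : E3) 0) ^ 2 * ((x : E3) 1) ^ 2 ∂sphMeasure) * frobSq (matM g σ)
        + (∫ x : sphere (0 : E3) 1,
            ((x : E3) 0) ^ 2 * ((x : E3) 1) ^ 2 ∂sphMeasure) * (Matrix.trace (matM g σ)) ^ 2 :=
  average_second_derivatives_general g hg σ
end
end

section
/- Let g : ℝ³ → ℝ be C³. Then ∫_{S²} ( Σ_{i=1}^3 b_i·∇(b_i·∇g)(σ) )² dσ = ∫_{S²} ‖M_g(σ)‖² dσ + (1/2)·∫_{S²} Σ_{i=1}^3 ( b_i·∇g(σ) )² dσ = Σ_{i,j=1}^3 ∫_{S²} ( b_i·∇(b_j·∇g)(σ) )² dσ. -/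
open MeasureTheory Real Set Metric Matrix
open scoped ENNReal

noncomputable section

open scoped Pointwise RealInnerProductSpace

/-!
Write `L_i = b_i·∇`. Since `b_i` is skew, `t ↦ exp (t b_i)` is a one-parameter group of
rotations; the surface measure is rotation invariant, so `t ↦ ∫ h (exp (t b_i) σ) dσ` is
constant and its derivative at `0` gives `∫_{S²} L_i h = 0` for every `C¹` function `h`.

The commutation relations `[L_i, L_{i+1}] = -L_{i+2}` (indices mod 3) then show that
`(∑ L_i L_i g)² - ∑_{i,j} (L_i L_j g)²` is pointwise of the form `∑_m L_m F_m`, which gives the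
second identity. The first one then reduces to a pointwise fact: the antisymmetric part of `A_g`
has entries `± L_k g / 2`, so `‖A_g‖² = ‖M_g‖² + ½ ∑_k (L_k g)²`.
-/

section DirectionalDerivative

variable {E : Type*} [NormedAddCommGroup E] [NormedSpace ℝ E] {φ f h : E → ℝ} {x : E}

lemma contDiff_dd {m n : WithTop ℕ∞} (hφ : ContDiff ℝ m φ) (b : E →L[ℝ] E)
    (hnm : n + 1 ≤ m) : ContDiff ℝ n (dd b φ) :=
  (hφ.fderiv_right hnm).clm_apply b.contDiff

lemma continuous_dd (hφ : ContDiff ℝ 1 φ) (b : E →L[ℝ] E) : Continuous (dd b φ) :=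
  (hφ.continuous_fderiv one_ne_zero).clm_apply b.continuous

lemma norm_dd_le (b : E →L[ℝ] E) (φ : E → ℝ) (x : E) :
    ‖dd b φ x‖ ≤ ‖fderiv ℝ φ x‖ * ‖b‖ * ‖x‖ :=
  ((fderiv ℝ φ x).le_opNorm _).trans <| by
    rw [mul_assoc]
    exact mul_le_mul_of_nonneg_left (b.le_opNorm x) (norm_nonneg _)

lemma dd_add (b : E → E) (hf : DifferentiableAt ℝ f x) (hh : DifferentiableAt ℝ h x) :
    dd b (fun y => f y + h y) x = dd b f x + dd b h x := by
  simp [dd, fderiv_fun_add hf hh]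

lemma dd_sub (b : E → E) (hf : DifferentiableAt ℝ f x) (hh : DifferentiableAt ℝ h x) :
    dd b (fun y => f y - h y) x = dd b f x - dd b h x := by
  simp [dd, fderiv_fun_sub hf hh]

lemma dd_const_mul (b : E → E) (hf : DifferentiableAt ℝ f x) (c : ℝ) :
    dd b (fun y => c * f y) x = c * dd b f x := by
  simp [dd, fderiv_const_mul hf]

lemma dd_mul (b : E → E) (hf : DifferentiableAt ℝ f x) (hh : DifferentiableAt ℝ h x) :
    dd b (fun y => f y * h y) x = dd b f x * h x + f x * dd b h x := by
  simp only [dd, fderiv_fun_mul hf hh, _root_.add_apply, _root_.smul_apply, smul_eq_mul]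
  ring

lemma dd_dd_apply (hφ : ContDiff ℝ 2 φ) (a c : E →L[ℝ] E) (x : E) :
    dd a (dd c φ) x = fderiv ℝ (fderiv ℝ φ) x (a x) (c x) + fderiv ℝ φ x (c (a x)) := by
  have hφ' : HasFDerivAt (fderiv ℝ φ) (fderiv ℝ (fderiv ℝ φ) x) x :=
    ((hφ.fderiv_right le_rfl).differentiable one_ne_zero x).hasFDerivAt
  change fderiv ℝ (fun y => fderiv ℝ φ y (c y)) x (a x) = _
  simp [(hφ'.clm_apply c.hasFDerivAt).fderiv, add_comm]

lemma dd_dd_sub_dd_dd (hφ : ContDiff ℝ 2 φ) (a c : E →L[ℝ] E) (x : E) :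
    dd a (dd c φ) x - dd c (dd a φ) x = fderiv ℝ φ x (c (a x) - a (c x)) := by
  rw [dd_dd_apply hφ, dd_dd_apply hφ,
    hφ.contDiffAt.isSymmSndFDerivAt (by simp) (a x) (c x), map_sub]
  ring

end DirectionalDerivative

section SphereMeasure

variable {E : Type*} [NormedAddCommGroup E] [InnerProductSpace ℝ E]

namespace LinearIsometryEquiv

def sphereMap (e : E ≃ₗᵢ[ℝ] E) (σ : sphere (0 : E) 1) : sphere (0 : E) 1 :=
  ⟨e σ, by simp⟩

lemma continuous_sphereMap (e : E ≃ₗᵢ[ℝ] E) : Continuous e.sphereMap :=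
  (e.continuous.comp continuous_subtype_val).subtype_mk _

lemma image_val_preimage_sphereMap (e : E ≃ₗᵢ[ℝ] E) (s : Set (sphere (0 : E) 1)) :
    Subtype.val '' (e.sphereMap ⁻¹' s) = e ⁻¹' (Subtype.val '' s) := by
  ext x
  constructor
  · rintro ⟨σ, hσ, rfl⟩
    exact ⟨_, hσ, rfl⟩
  · rintro ⟨τ, hτ, hx⟩
    have hxs : x ∈ sphere (0 : E) 1 := by simp [← e.norm_map x, ← hx]
    refine ⟨⟨x, hxs⟩, ?_, rfl⟩
    rwa [mem_preimage, show e.sphereMap ⟨x, hxs⟩ = τ from Subtype.ext hx.symm]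

lemma preimage_smul_set (e : E ≃ₗᵢ[ℝ] E) (I : Set ℝ) (A : Set E) :
    e ⁻¹' (I • A) = I • (e ⁻¹' A) := by
  ext x
  simp only [mem_preimage, mem_smul]
  constructor
  · rintro ⟨r, hr, a, ha, hx⟩
    exact ⟨r, hr, e.symm a, by simpa using ha, by rw [← _root_.map_smul, hx, symm_apply_apply]⟩
  · rintro ⟨r, hr, y, hy, rfl⟩
    exact ⟨r, hr, e y, hy, (_root_.map_smul e r y).symm⟩

variable [FiniteDimensional ℝ E] [MeasurableSpace E] [BorelSpace E]

lemma measurableEmbedding_sphereMap (e : E ≃ₗᵢ[ℝ] E) : MeasurableEmbedding e.sphereMap :=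
  (e.continuous_sphereMap.isClosedEmbedding fun _ _ h =>
    Subtype.ext (e.injective (congrArg Subtype.val h))).measurableEmbedding

lemma measurePreserving_sphereMap (e : E ≃ₗᵢ[ℝ] E) :
    MeasurePreserving e.sphereMap (volume : Measure E).toSphere (volume : Measure E).toSphere := by
  refine ⟨e.continuous_sphereMap.measurable, Measure.ext fun s hs => ?_⟩
  rw [Measure.map_apply e.continuous_sphereMap.measurable hs,
    Measure.toSphere_apply' _ (e.continuous_sphereMap.measurable hs), Measure.toSphere_apply' _ hs,
    image_val_preimage_sphereMap, ← preimage_smul_set]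
  congr 1
  exact MeasurePreserving.measure_preimage_equiv (f := e.toMeasurableEquiv) e.measurePreserving _

theorem integral_toSphere_comp (e : E ≃ₗᵢ[ℝ] E) (f : E → ℝ) :
    ∫ σ, f (e σ) ∂(volume : Measure E).toSphere = ∫ σ, f σ ∂(volume : Measure E).toSphere :=
  e.measurePreserving_sphereMap.integral_comp e.measurableEmbedding_sphereMap (fun σ => f σ)

end LinearIsometryEquiv

lemma integrable_toSphere_of_continuous [FiniteDimensional ℝ E] [MeasurableSpace E] [BorelSpace E]
    {f : sphere (0 : E) 1 → ℝ} (hf : Continuous f) : Integrable f (volume : Measure E).toSphere :=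
  hf.integrable_of_hasCompactSupport (HasCompactSupport.of_compactSpace f)

end SphereMeasure

section SkewFlow

variable {E : Type*} [NormedAddCommGroup E] [InnerProductSpace ℝ E] [FiniteDimensional ℝ E]
  (b : E →L[ℝ] E) (hb : ∀ z, ⟪b z, z⟫ = 0)
include hb

lemma norm_exp_smul_apply (t : ℝ) (z : E) : ‖NormedSpace.exp (t • b) z‖ = ‖z‖ := by
  have hderiv (u : ℝ) :
      HasDerivAt (fun s : ℝ => NormedSpace.exp (s • b) z) (b (NormedSpace.exp (u • b) z)) u := by
    simpa using (hasDerivAt_exp_smul_const' b u).clm_apply (hasDerivAt_const u z)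
  have hconst := is_const_of_deriv_eq_zero (f := fun s : ℝ => ‖NormedSpace.exp (s • b) z‖ ^ 2)
    (fun u => (hderiv u).norm_sq.differentiableAt)
    (fun u => by rw [(hderiv u).norm_sq.deriv, real_inner_comm, hb, mul_zero]) t 0
  simpa using hconst

def skewFlow (t : ℝ) : E ≃ₗᵢ[ℝ] E :=
  LinearIsometry.toLinearIsometryEquiv
    { toLinearMap := (NormedSpace.exp (t • b) : E →L[ℝ] E)
      norm_map' := norm_exp_smul_apply b hb t } rfl

lemma skewFlow_apply (t : ℝ) (z : E) : skewFlow b hb t z = NormedSpace.exp (t • b) z := rfl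

lemma skewFlow_zero_apply (z : E) : skewFlow b hb 0 z = z := by
  simp [skewFlow_apply]

lemma hasDerivAt_skewFlow_apply (z : E) (t : ℝ) :
    HasDerivAt (fun s => skewFlow b hb s z) (b (skewFlow b hb t z)) t := by
  simpa [skewFlow_apply] using (hasDerivAt_exp_smul_const' b t).clm_apply (hasDerivAt_const t z)

variable [MeasurableSpace E] [BorelSpace E]

theorem integral_toSphere_dd_eq_zero {h : E → ℝ} (hh : ContDiff ℝ 1 h) :
    ∫ σ, dd b h σ ∂(volume : Measure E).toSphere = 0 := by
  obtain ⟨C, hC⟩ := (isCompact_sphere (0 : E) 1).exists_bound_of_continuousOn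
    (hh.continuous_fderiv one_ne_zero).continuousOn
  have hflow (t : ℝ) : Continuous fun σ : sphere (0 : E) 1 => skewFlow b hb t σ :=
    (skewFlow b hb t).continuous.comp continuous_subtype_val
  have key := hasDerivAt_integral_of_dominated_loc_of_deriv_le
    (μ := (volume : Measure E).toSphere) (x₀ := 0) (s := univ) Filter.univ_mem
    (F := fun t (σ : sphere (0 : E) 1) => h (skewFlow b hb t σ))
    (F' := fun t σ => dd b h (skewFlow b hb t σ)) (bound := fun _ => C * ‖b‖)
    (.of_forall fun t => (hh.continuous.comp (hflow t)).aestronglyMeasurable)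
    (integrable_toSphere_of_continuous (hh.continuous.comp (hflow 0)))
    (((continuous_dd hh b).comp (hflow 0)).aestronglyMeasurable)
    (.of_forall fun σ t _ => by
      have hσ : skewFlow b hb t σ ∈ sphere (0 : E) 1 := by simp
      refine (norm_dd_le b h _).trans ?_
      rw [mem_sphere_zero_iff_norm.1 hσ, mul_one]
      exact mul_le_mul_of_nonneg_right (hC _ hσ) (norm_nonneg b))
    (integrable_const _)
    (.of_forall fun σ t _ => (hh.differentiable one_ne_zero _).hasFDerivAt.comp_hasDerivAt t
      (hasDerivAt_skewFlow_apply b hb σ t))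
  have hconst : (fun t => ∫ σ, h (skewFlow b hb t σ) ∂(volume : Measure E).toSphere)
      = fun _ => ∫ σ, h σ ∂(volume : Measure E).toSphere :=
    funext fun t => (skewFlow b hb t).integral_toSphere_comp h
  rw [hconst] at key
  simpa [skewFlow_zero_apply] using key.2.unique (hasDerivAt_const _ _)

end SkewFlow

def bvecL (k : Fin 3) : E3 →L[ℝ] E3 :=
  LinearMap.toContinuousLinearMap ((WithLp.linearEquiv 2 ℝ (Fin 3 → ℝ)).symm.toLinearMap ∘ₗ
    crossProduct (Pi.single k 1) ∘ₗ (WithLp.linearEquiv 2 ℝ (Fin 3 → ℝ)).toLinearMap)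

@[simp] lemma coe_bvecL (k : Fin 3) : ⇑(bvecL k) = bvec k := rfl

lemma inner_bvecL_self (k : Fin 3) (z : E3) : ⟪bvecL k z, z⟫ = 0 := by
  fin_cases k <;>
    simp [bvec, cross3, EuclideanSpace.inner_eq_star_dotProduct, Fin.sum_univ_three, dotProduct] <;>
    ring

lemma bvec_bvec_sub_bvec_bvec (i : Fin 3) (z : E3) :
    bvec (i + 1) (bvec i z) - bvec i (bvec (i + 1) z) = -bvec (i + 2) z := by
  fin_cases i <;> ext j <;> fin_cases j <;> simp [bvec, cross3]

lemma dd_bvec_comm {φ : E3 → ℝ} (hφ : ContDiff ℝ 2 φ) (i : Fin 3) (x : E3) :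
    dd (bvec i) (dd (bvec (i + 1)) φ) x
      = dd (bvec (i + 1)) (dd (bvec i) φ) x - dd (bvec (i + 2)) φ x := by
  have h := dd_dd_sub_dd_dd hφ (bvecL i) (bvecL (i + 1)) x
  simp only [coe_bvecL, bvec_bvec_sub_bvec_bvec, map_neg] at h
  linarith [show dd (bvec (i + 2)) φ x = fderiv ℝ φ x (bvec (i + 2) x) from rfl]

lemma integral_sum_dd_bvec_eq_zero {F : Fin 3 → E3 → ℝ} (hF : ∀ m, ContDiff ℝ 1 (F m)) :
    ∫ σ : sphere (0 : E3) 1, ∑ m, dd (bvec m) (F m) σ ∂sphMeasure = 0 := by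
  rw [integral_finsetSum]
  · exact Finset.sum_eq_zero fun m _ => integral_toSphere_dd_eq_zero _ (inner_bvecL_self m) (hF m)
  · exact fun m _ => integrable_toSphere_of_continuous
      ((continuous_dd (hF m) (bvecL m)).comp continuous_subtype_val)

lemma frobSq_eq_frobSq_symm_add (A : Matrix (Fin 3) (Fin 3) ℝ) :
    frobSq A = frobSq ((1 / 2 : ℝ) • (A + Aᵀ)) + 1 / 2 * ∑ i, (A i (i + 1) - A (i + 1) i) ^ 2 := by
  simp only [frobSq, Fin.sum_univ_three, Matrix.smul_apply, Matrix.add_apply, transpose_apply,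
    smul_eq_mul, Fin.reduceAdd, Fin.isValue]
  ring

section SecondDerivatives

variable {g : E3 → ℝ}

lemma contDiff_dd_bvec (hg : ContDiff ℝ 3 g) (k : Fin 3) : ContDiff ℝ 2 (dd (bvec k) g) :=
  contDiff_dd hg (bvecL k) (by norm_num)

lemma contDiff_dd_bvec_dd_bvec (hg : ContDiff ℝ 3 g) (i j : Fin 3) :
    ContDiff ℝ 1 (dd (bvec i) (dd (bvec j) g)) :=
  contDiff_dd (contDiff_dd_bvec hg j) (bvecL i) (by norm_num)

lemma frobSq_matA_eq_frobSq_matM_add (hg : ContDiff ℝ 2 g) (x : E3) :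
    frobSq (matA g x) = frobSq (matM g x) + 1 / 2 * ∑ i, dd (bvec i) g x ^ 2 := by
  rw [frobSq_eq_frobSq_symm_add, ← Equiv.sum_comp (Equiv.addRight 2) (fun i => dd (bvec i) g x ^ 2)]
  simp [matA, matM, dd_bvec_comm hg]

/-- Found by integrating `L_i L_i g · L_j L_j g` by parts twice, first along `L_i`, then along
`L_j`, commuting the derivatives in between. -/
def laplacianFlux (g : E3 → ℝ) (m : Fin 3) (x : E3) : ℝ :=
  2 * (dd (bvec (m + 1)) (dd (bvec (m + 1)) g) x * dd (bvec m) g x)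
    - 2 * (dd (bvec (m + 2)) (dd (bvec m) g) x * dd (bvec (m + 2)) g x)
    + dd (bvec (m + 1)) g x * dd (bvec (m + 2)) g x

lemma contDiff_laplacianFlux (hg : ContDiff ℝ 3 g) (m : Fin 3) :
    ContDiff ℝ 1 (laplacianFlux g m) := by
  have hG k := (contDiff_dd_bvec hg k).of_le one_le_two
  have hA := contDiff_dd_bvec_dd_bvec hg
  unfold laplacianFlux
  fun_prop

lemma dd_laplacianFlux (hg : ContDiff ℝ 3 g) (m : Fin 3) (x : E3) :
    dd (bvec m) (laplacianFlux g m) x =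
      2 * (dd (bvec m) (dd (bvec (m + 1)) (dd (bvec (m + 1)) g)) x * dd (bvec m) g x
        + dd (bvec (m + 1)) (dd (bvec (m + 1)) g) x * dd (bvec m) (dd (bvec m) g) x)
      - 2 * (dd (bvec m) (dd (bvec (m + 2)) (dd (bvec m) g)) x * dd (bvec (m + 2)) g x
        + dd (bvec (m + 2)) (dd (bvec m) g) x * dd (bvec m) (dd (bvec (m + 2)) g) x)
      + (dd (bvec m) (dd (bvec (m + 1)) g) x * dd (bvec (m + 2)) g x
        + dd (bvec (m + 1)) g x * dd (bvec m) (dd (bvec (m + 2)) g) x) := by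
  have hG k := (contDiff_dd_bvec hg k).differentiable (by norm_num)
  have hA i j := (contDiff_dd_bvec_dd_bvec hg i j).differentiable one_ne_zero
  unfold laplacianFlux
  rw [dd_add _ (by fun_prop) (by fun_prop), dd_sub _ (by fun_prop) (by fun_prop),
    dd_const_mul _ (by fun_prop), dd_const_mul _ (by fun_prop), dd_mul _ (hA _ _ x) (hG _ x),
    dd_mul _ (hA _ _ x) (hG _ x), dd_mul _ (hG _ x) (hG _ x)]

lemma sq_sum_dd_dd_eq_frobSq_matA_add (hg : ContDiff ℝ 3 g) (x : E3) :
    (∑ i, dd (bvec i) (dd (bvec i) g) x) ^ 2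
      = frobSq (matA g x) + ∑ m, dd (bvec m) (laplacianFlux g m) x := by
  have hg2 : ContDiff ℝ 2 g := hg.of_le (by norm_num)
  have comm0 := dd_bvec_comm hg2 0 x
  have comm1 := dd_bvec_comm hg2 1 x
  have comm2 := dd_bvec_comm hg2 2 x
  have comm0' := dd_bvec_comm (contDiff_dd_bvec hg 1) 0 x
  have comm1' := dd_bvec_comm (contDiff_dd_bvec hg 2) 1 x
  have comm2' := dd_bvec_comm (contDiff_dd_bvec hg 0) 2 x
  simp only [frobSq, matA, Fin.sum_univ_three, dd_laplacianFlux hg, Fin.reduceAdd, Fin.isValue]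
    at comm0 comm1 comm2 comm0' comm1' comm2' ⊢
  rw [comm0', comm1', comm2', comm0, comm1, comm2]
  ring

lemma integral_sq_sum_dd_dd_eq_integral_frobSq_matA (hg : ContDiff ℝ 3 g) :
    ∫ σ : sphere (0 : E3) 1, (∑ i, dd (bvec i) (dd (bvec i) g) σ) ^ 2 ∂sphMeasure
      = ∫ σ : sphere (0 : E3) 1, frobSq (matA g σ) ∂sphMeasure := by
  have hA i j := (contDiff_dd_bvec_dd_bvec hg i j).continuous
  have hdF m := continuous_dd (contDiff_laplacianFlux hg m) (bvecL m)
  simp_rw [sq_sum_dd_dd_eq_frobSq_matA_add hg]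
  rw [integral_add, integral_sum_dd_bvec_eq_zero (contDiff_laplacianFlux hg), add_zero]
  all_goals apply integrable_toSphere_of_continuous
  · simp only [frobSq, matA]
    fun_prop
  · fun_prop

end SecondDerivatives

/-- **The integral of the squared "Laplacian" equals that of the full second
derivatives** (Lemma 8.9 in the paper). -/
theorem laplacian_squared_identity
    (g : E3 → ℝ) (hg : ContDiff ℝ 3 g) :
    (∫ σ : sphere (0 : E3) 1,
        (∑ i : Fin 3, dd (bvec i) (dd (bvec i) g) σ) ^ 2 ∂sphMeasure)
      = (∫ σ : sphere (0 : E3) 1, frobSq (matM g σ) ∂sphMeasure)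
        + (1 / 2 : ℝ) * ∫ σ : sphere (0 : E3) 1,
            (∑ i : Fin 3, (dd (bvec i) g σ) ^ 2) ∂sphMeasure
    ∧ (∫ σ : sphere (0 : E3) 1,
        (∑ i : Fin 3, dd (bvec i) (dd (bvec i) g) σ) ^ 2 ∂sphMeasure)
      = ∑ i : Fin 3, ∑ j : Fin 3, ∫ σ : sphere (0 : E3) 1,
          (dd (bvec i) (dd (bvec j) g) σ) ^ 2 ∂sphMeasure := by
  have hG i := (contDiff_dd_bvec hg i).continuous
  have hA i j := (contDiff_dd_bvec_dd_bvec hg i j).continuous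
  rw [integral_sq_sum_dd_dd_eq_integral_frobSq_matA hg]
  constructor
  · simp_rw [frobSq_matA_eq_frobSq_matM_add (hg.of_le (by norm_num))]
    rw [integral_add, integral_const_mul]
    all_goals apply integrable_toSphere_of_continuous
    · simp only [frobSq, matM, matA, Matrix.smul_apply, Matrix.add_apply, Matrix.transpose_apply]
      fun_prop
    · fun_prop
  · simp_rw [frobSq, matA]
    rw [integral_finsetSum]
    · exact Finset.sum_congr rfl fun i _ =>
        integral_finsetSum _ fun j _ => integrable_toSphere_of_continuous (by fun_prop)
    · exact fun i _ => integrable_toSphere_of_continuous (by fun_prop)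
end
end

section
/- Let h : ℝ → (0,∞) be C³ and π-periodic, i.e. h(θ + π) = h(θ) for all θ. Then ∫_0^{2π} ( (log h)''(θ) )²·h(θ) dθ ≥ 4·∫_0^{2π} ( (log h)'(θ) )²·h(θ) dθ. (This is the statement that for a positive C³ function f on the circle S¹ satisfying f(σ) = f(−σ), the integral of f times the squared second tangential derivative of log f dominates 4 times the integral of f times the squared first tangential derivative of log f; moreover the constant 4 is optimal.) -/
/-! With `g = log h`, `u = g'`, `v = g''`, the function `w = (e^{g/2})' = (u/2) e^{g/2}` is
`π`-periodic with mean zero. Differentiation multiplies its `n`-th Fourier coefficient on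
`[0, π]` by `2in`, so Parseval gives Wirtinger's inequality `4 ∫ w² ≤ ∫ w'²`, that is
`4 ∫ u² e^g ≤ ∫ (v + u²/2)² e^g`. Since `(u³ e^g)' = (3u²v + u⁴) e^g` has zero integral
over a period, `∫ (v + u²/2)² e^g = ∫ v² e^g - (1/12) ∫ u⁴ e^g ≤ ∫ v² e^g`.
Periodicity then doubles both sides from `[0, π]` to `[0, 2π]`. -/

open MeasureTheory Real Set Metric Matrix
open scoped ENNReal

noncomputable section

theorem ContinuousOn.memLp_restrict_of_isCompact {X E : Type*} [TopologicalSpace X]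
    [MeasurableSpace X] [OpensMeasurableSpace X] [NormedAddCommGroup E]
    [SecondCountableTopologyEither X E]
    {μ : Measure X} [IsFiniteMeasureOnCompacts μ] {s : Set X} {f : X → E}
    (hs : IsCompact s) (hms : MeasurableSet s) (hf : ContinuousOn f s) (p : ℝ≥0∞) :
    MemLp f p (μ.restrict s) := by
  obtain ⟨C, hC⟩ := hs.exists_bound_of_continuousOn hf
  have : IsFiniteMeasure (μ.restrict s) := isFiniteMeasure_restrict.mpr hs.measure_lt_top.ne
  exact (memLp_top_of_bound (hf.aestronglyMeasurable hms) C
    (ae_restrict_of_forall_mem hms hC)).mono_exponent le_top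

theorem wirtinger_inequality {a b : ℝ} (hab : a < b) {f f' : ℝ → ℂ}
    (hf : ∀ x ∈ Icc a b, HasDerivAt f (f' x) x) (hf' : ContinuousOn f' (Icc a b))
    (hfab : f a = f b) (hmean : ∫ x in a..b, f x = 0) :
    (2 * π / (b - a)) ^ 2 * ∫ x in a..b, ‖f x‖ ^ 2 ≤ ∫ x in a..b, ‖f' x‖ ^ 2 := by
  have hba : 0 < b - a := sub_pos.mpr hab
  have hcoeff : ∀ n : ℤ, (2 * π / (b - a)) ^ 2 * ‖fourierCoeffOn hab f n‖ ^ 2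
      ≤ ‖fourierCoeffOn hab f' n‖ ^ 2 := by
    intro n
    rcases eq_or_ne n 0 with rfl | hn
    · have hc0 : fourierCoeffOn hab f 0 = 0 := by simp [fourierCoeffOn_eq_integral, hmean]
      simp [hc0]
    have h := fourierCoeffOn_of_hasDerivAt hab hn (by rwa [uIcc_of_le hab.le])
      (hf'.intervalIntegrable_of_Icc hab.le)
    rw [hfab, sub_self, mul_zero, zero_sub] at h
    have hrel : fourierCoeffOn hab f' n
        = (2 * π * Complex.I * n / (b - a)) * fourierCoeffOn hab f n := by
      have : (b : ℂ) - a ≠ 0 := by exact_mod_cast hba.ne'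
      rw [h]
      field_simp
    have hnorm : ‖(2 * π * Complex.I * n / (b - a) : ℂ)‖ ^ 2
        = (2 * π / (b - a)) ^ 2 * (n : ℝ) ^ 2 := by
      have hba' : ‖(b : ℂ) - a‖ = b - a := by
        rw [← Complex.ofReal_sub, Complex.norm_real, Real.norm_of_nonneg hba.le]
      simp only [Complex.norm_div, Complex.norm_mul, Complex.norm_ofNat, Complex.norm_real,
        norm_eq_abs, abs_of_pos pi_pos, Complex.norm_I, mul_one, Complex.norm_intCast, hba']
      rw [← sq_abs (n : ℝ)]
      ring
    have hn1 : (1 : ℝ) ≤ (n : ℝ) ^ 2 :=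
      (one_le_sq_iff_one_le_abs _).mpr (by exact_mod_cast Int.one_le_abs hn)
    rw [hrel, norm_mul, mul_pow, hnorm]
    gcongr
    exact le_mul_of_one_le_right (by positivity) hn1
  have hL2 : ∀ g : ℝ → ℂ, ContinuousOn g (Icc a b) →
      MemLp g 2 (volume.restrict (Ioc a b)) :=
    fun g hg => (hg.memLp_restrict_of_isCompact isCompact_Icc measurableSet_Icc 2).mono_measure
      (Measure.restrict_mono Ioc_subset_Icc_self le_rfl)
  have hfc : ContinuousOn f (Icc a b) := fun x hx => (hf x hx).continuousAt.continuousWithinAt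
  have hparseval := hasSum_le hcoeff ((hasSum_sq_fourierCoeffOn hab (hL2 f hfc)).mul_left _)
    (hasSum_sq_fourierCoeffOn hab (hL2 f' hf'))
  rwa [smul_eq_mul, smul_eq_mul, mul_left_comm, mul_le_mul_iff_right₀ (inv_pos.mpr hba)]
    at hparseval

theorem wirtinger_inequality_real {a b : ℝ} (hab : a < b) {f f' : ℝ → ℝ}
    (hf : ∀ x ∈ Icc a b, HasDerivAt f (f' x) x) (hf' : ContinuousOn f' (Icc a b))
    (hfab : f a = f b) (hmean : ∫ x in a..b, f x = 0) :
    (2 * π / (b - a)) ^ 2 * ∫ x in a..b, f x ^ 2 ≤ ∫ x in a..b, f' x ^ 2 := by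
  have := wirtinger_inequality hab (f := fun x => (f x : ℂ)) (f' := fun x => (f' x : ℂ))
    (fun x hx => (hf x hx).ofReal_comp) (Complex.continuous_ofReal.comp_continuousOn hf')
    (by rw [hfab]) (by rw [intervalIntegral.integral_ofReal, hmean, Complex.ofReal_zero])
  simpa [sq_abs] using this

theorem Function.Periodic.deriv {f : ℝ → ℝ} {T : ℝ} (hf : Function.Periodic f T) :
    Function.Periodic (deriv f) T := fun x => by
  rw [← deriv_comp_add_const, hf.funext]

theorem Function.Periodic.intervalIntegral_zero_two_mul {f : ℝ → ℝ} {T : ℝ}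
    (hf : Function.Periodic f T) (hfc : Continuous f) :
    ∫ x in 0..2 * T, f x = 2 * ∫ x in 0..T, f x := by
  simpa using hf.intervalIntegral_add_zsmul_eq 2 0 fun _ _ => hfc.intervalIntegrable _ _

section WeightedLogPoincare

variable {a b : ℝ} {g u v : ℝ → ℝ}
  (hg : ∀ t ∈ Icc a b, HasDerivAt g (u t) t) (hu : ∀ t ∈ Icc a b, HasDerivAt u (v t) t)
  (hv : ContinuousOn v (Icc a b)) (hgab : g a = g b) (huab : u a = u b)
include hg hu hv hgab huab

theorem integral_sq_add_sq_div_two_mul_exp_le (hab : a ≤ b) :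
    ∫ t in a..b, (v t + u t ^ 2 / 2) ^ 2 * exp (g t) ≤ ∫ t in a..b, v t ^ 2 * exp (g t) := by
  have hgc : ContinuousOn g (Icc a b) := fun t ht => (hg t ht).continuousAt.continuousWithinAt
  have huc : ContinuousOn u (Icc a b) := fun t ht => (hu t ht).continuousAt.continuousWithinAt
  have hint : ∀ F : ℝ → ℝ, ContinuousOn F (Icc a b) → IntervalIntegrable F volume a b :=
    fun F hF => hF.intervalIntegrable_of_Icc hab
  have hcube_deriv : ∀ t ∈ Icc a b, HasDerivAt (fun t => u t ^ 3 * exp (g t))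
      ((3 * u t ^ 2 * v t + u t ^ 4) * exp (g t)) t := fun t ht =>
    (((hu t ht).fun_pow 3).fun_mul (hg t ht).exp).congr_deriv (by ring)
  have hcube : ∫ t in a..b, (3 * u t ^ 2 * v t + u t ^ 4) * exp (g t) = 0 := by
    rw [intervalIntegral.integral_eq_sub_of_hasDerivAt (by rwa [uIcc_of_le hab])
      (hint _ (by fun_prop)), hgab, huab, sub_self]
  calc ∫ t in a..b, (v t + u t ^ 2 / 2) ^ 2 * exp (g t)
      = ∫ t in a..b, (v t ^ 2 * exp (g t)
          + (1 / 3) * ((3 * u t ^ 2 * v t + u t ^ 4) * exp (g t))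
          - (1 / 12) * (u t ^ 4 * exp (g t))) :=
        intervalIntegral.integral_congr fun t _ => by ring
    _ = (∫ t in a..b, v t ^ 2 * exp (g t)) - (1 / 12) * ∫ t in a..b, u t ^ 4 * exp (g t) := by
        rw [intervalIntegral.integral_sub, intervalIntegral.integral_add,
          intervalIntegral.integral_const_mul, intervalIntegral.integral_const_mul, hcube]
        · ring
        all_goals apply hint; fun_prop
    _ ≤ ∫ t in a..b, v t ^ 2 * exp (g t) := by
        have : 0 ≤ ∫ t in a..b, u t ^ 4 * exp (g t) :=
          intervalIntegral.integral_nonneg hab fun t _ => by positivity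
        linarith

theorem wirtinger_inequality_deriv_exp_half (hab : a < b) :
    (2 * π / (b - a)) ^ 2 * ∫ t in a..b, u t ^ 2 * exp (g t)
      ≤ ∫ t in a..b, (v t + u t ^ 2 / 2) ^ 2 * exp (g t) := by
  have hgc : ContinuousOn g (Icc a b) := fun t ht => (hg t ht).continuousAt.continuousWithinAt
  have huc : ContinuousOn u (Icc a b) := fun t ht => (hu t ht).continuousAt.continuousWithinAt
  have hsq : ∀ t, exp (g t / 2) ^ 2 = exp (g t) := fun t => by
    rw [sq, ← exp_add, add_halves]
  have hexp_half : ∀ t ∈ Icc a b,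
      HasDerivAt (fun s => exp (g s / 2)) (u t / 2 * exp (g t / 2)) t := fun t ht =>
    ((hg t ht).div_const 2).exp.congr_deriv (mul_comm _ _)
  have hw : ∀ t ∈ Icc a b, HasDerivAt (fun s => u s / 2 * exp (g s / 2))
      ((v t + u t ^ 2 / 2) / 2 * exp (g t / 2)) t := fun t ht =>
    (((hu t ht).div_const 2).fun_mul (hexp_half t ht)).congr_deriv (by ring)
  have hmean : ∫ t in a..b, u t / 2 * exp (g t / 2) = 0 := by
    rw [intervalIntegral.integral_eq_sub_of_hasDerivAt (by rwa [uIcc_of_le hab.le])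
      ((by fun_prop : ContinuousOn _ (Icc a b)).intervalIntegrable_of_Icc hab.le), hgab, sub_self]
  have hwirt := wirtinger_inequality_real hab hw (by fun_prop) (by rw [hgab, huab]) hmean
  have hw_sq : ∫ t in a..b, (u t / 2 * exp (g t / 2)) ^ 2
      = 1 / 4 * ∫ t in a..b, u t ^ 2 * exp (g t) := by
    rw [← intervalIntegral.integral_const_mul]
    exact intervalIntegral.integral_congr fun t _ => by rw [mul_pow, hsq]; ring
  have hw'_sq : ∫ t in a..b, ((v t + u t ^ 2 / 2) / 2 * exp (g t / 2)) ^ 2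
      = 1 / 4 * ∫ t in a..b, (v t + u t ^ 2 / 2) ^ 2 * exp (g t) := by
    rw [← intervalIntegral.integral_const_mul]
    exact intervalIntegral.integral_congr fun t _ => by rw [mul_pow, hsq]; ring
  rw [hw_sq, hw'_sq] at hwirt
  linarith

theorem weighted_log_poincare (hab : a < b) :
    (2 * π / (b - a)) ^ 2 * ∫ t in a..b, u t ^ 2 * exp (g t)
      ≤ ∫ t in a..b, v t ^ 2 * exp (g t) :=
  (wirtinger_inequality_deriv_exp_half hg hu hv hgab huab hab).trans
    (integral_sq_add_sq_div_two_mul_exp_le hg hu hv hgab huab hab.le)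

end WeightedLogPoincare

/-- **The one-dimensional log-Poincaré inequality on the circle** (Lemma A.2 in the
paper, in arclength parametrization): for a positive `C³` function `h` on `ℝ` that is
`π`-periodic (i.e. an even function on `S¹`),
`∫₀^{2π} ((log h)'')² h ≥ 4 ∫₀^{2π} ((log h)')² h`. -/
theorem circle_log_poincare
    (h : ℝ → ℝ) (hsm : ContDiff ℝ 3 h) (hpos : ∀ θ, 0 < h θ)
    (hper : ∀ θ, h (θ + Real.pi) = h θ) :
    4 * ∫ θ in (0 : ℝ)..(2 * Real.pi),
        (deriv (fun t => Real.log (h t)) θ) ^ 2 * h θ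
      ≤ ∫ θ in (0 : ℝ)..(2 * Real.pi),
          (deriv (deriv (fun t => Real.log (h t))) θ) ^ 2 * h θ := by
  set g : ℝ → ℝ := fun t => log (h t) with hg_def
  have hg : ContDiff ℝ 2 g := (hsm.log fun t => (hpos t).ne').of_le (by norm_num)
  have hgper : Function.Periodic g π := fun t => by simp only [hg_def, hper t]
  have hexp : ∀ t, exp (g t) = h t := fun t => exp_log (hpos t)
  have hhc : Continuous h := hsm.continuous
  have hu : Continuous (deriv g) := hg.continuous_deriv one_le_two
  have hv : Continuous (deriv (deriv g)) := hg.deriv'.continuous_deriv_one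
  have hdouble : ∀ w : ℝ → ℝ, Continuous w → Function.Periodic w π →
      ∫ t in 0..2 * π, w t ^ 2 * h t = 2 * ∫ t in 0..π, w t ^ 2 * exp (g t) :=
    fun w hw hwper => by
      simp_rw [hexp]
      exact Function.Periodic.intervalIntegral_zero_two_mul
        (fun t => by simp only [hwper t, hper t]) (by fun_prop)
  have hcore := weighted_log_poincare (a := 0) (b := π)
    (fun t _ => (hg.differentiable two_ne_zero t).hasDerivAt)
    (fun t _ => (hg.differentiable_deriv_two t).hasDerivAt) hv.continuousOn
    hgper.eq.symm hgper.deriv.eq.symm pi_pos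
  rw [sub_zero, mul_div_cancel_right₀ _ pi_ne_zero] at hcore
  rw [hdouble _ hu hgper.deriv, hdouble _ hv hgper.deriv.deriv]
  linarith
end
end
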